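/- Let P be a symmetric operad in sets, i.e. a G-operad for the action operad G = Σ with π the identity. Then the associated monad P̲ on the category of sets is cartesian (P̲ preserves pullbacks and the naturality squares of its unit and multiplication are pullback squares) if and only if for every n the action of Σₙ on P(n) is free, i.e. p·σ = p implies σ is the identity permutation. -/

import Mathlib

/-- Cast an element of a dependent family along an equality of indices. -/
def castF (F : ℕ → Type) {a b : ℕ} (h : a = b) (x : F a) : F b := h ▸ x

/-- Splitting off the first summand of a sigma type over `Fin (n+1)`. -/
def sigmaFinSucc {n : ℕ} (β : Fin (n + 1) → Type) :
    (Σ i : Fin (n + 1), β i) ≃ (β 0 ⊕ Σ i : Fin n, β i.succ) where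
  toFun x := Fin.cases (motive := fun j => β j → β 0 ⊕ Σ i : Fin n, β i.succ)
    Sum.inl (fun i b => Sum.inr ⟨i, b⟩) x.1 x.2
  invFun s := Sum.elim (fun b => ⟨0, b⟩) (fun p => ⟨p.1.succ, p.2⟩) s
  left_inv x := by
    obtain ⟨i, b⟩ := x
    induction i using Fin.cases with
    | zero => rfl
    | succ i => rfl
  right_inv s := by rcases s with b | ⟨i, b⟩ <;> rfl

/-- The lexicographic identification of a disjoint union of blocks
`Fin (k 0), …, Fin (k (n-1))` (in this order) with `Fin (k 0 + ⋯ + k (n-1))`. -/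
def finSigmaEquiv : ∀ {n : ℕ} (k : Fin n → ℕ), (Σ i : Fin n, Fin (k i)) ≃ Fin (∑ i, k i)
  | 0, k => by
      haveI : IsEmpty (Fin (∑ i : Fin 0, k i)) := by
        rw [Finset.univ_eq_empty, Finset.sum_empty]; infer_instance
      exact Equiv.equivOfIsEmpty _ _
  | n + 1, k =>
      (sigmaFinSucc fun i => Fin (k i)).trans <|
        ((Equiv.sumCongr (Equiv.refl (Fin (k 0))) (finSigmaEquiv fun i => k i.succ)).trans
          (finSumFinEquiv.trans (finCongr (Fin.sum_univ_succ k).symm)))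

/-- Operadic composition in the symmetric operad:
`μ(σ; τ₁, …, τₙ) = σ⁺ · (τ₁ ⊕ ⋯ ⊕ τₙ)`. -/
def permOperadComp {n : ℕ} (k : Fin n → ℕ) (σ : Equiv.Perm (Fin n))
    (τ : ∀ i, Equiv.Perm (Fin (k i))) : Equiv.Perm (Fin (∑ i, k i)) :=
  (finSigmaEquiv k).symm.trans <|
    ((Equiv.sigmaCongr (β₂ := fun j => Fin (k (σ.symm j))) σ
        fun i => (τ i).trans (finCongr (congrArg k (σ.symm_apply_apply i).symm))).trans
      ((finSigmaEquiv fun j => k (σ.symm j)).trans (finCongr (Equiv.sum_comp σ.symm k))))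

lemma sum_sigma_eq {n : ℕ} (k : Fin n → ℕ) (m : ∀ i, Fin (k i) → ℕ) :
    (∑ s : Fin (∑ i, k i), m ((finSigmaEquiv k).symm s).1 ((finSigmaEquiv k).symm s).2)
      = ∑ i, ∑ j, m i j := by
  have h := Equiv.sum_comp (finSigmaEquiv k)
    (fun s => m ((finSigmaEquiv k).symm s).1 ((finSigmaEquiv k).symm s).2)
  rw [← h]
  have h2 : ∀ p : (i : Fin n) × Fin (k i),
      m ((finSigmaEquiv k).symm ((finSigmaEquiv k) p)).fst
          ((finSigmaEquiv k).symm ((finSigmaEquiv k) p)).snd = m p.1 p.2 := by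
    intro p; rw [Equiv.symm_apply_apply]
  rw [Finset.sum_congr rfl fun p _ => h2 p, ← Finset.univ_sigma_univ, Finset.sum_sigma]
/-- An action operad: an operad in sets whose levels are groups, with a map to the
symmetric operad that is levelwise a group homomorphism and an operad map, and
satisfying the exchange law relating group multiplication and operadic composition. -/
structure ActionOperad (G : ℕ → Type) [∀ n, Group (G n)] where
  /-- the operadic unit `id ∈ G(1)` -/
  unit : G 1
  /-- operadic composition `μ : G(n) × G(k₁) × ⋯ × G(kₙ) → G(k₁+⋯+kₙ)` -/
  comp : ∀ {n : ℕ} {k : Fin n → ℕ}, G n → (∀ i, G (k i)) → G (∑ i, k i)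
  /-- the underlying-permutation group homomorphisms `πₙ : G(n) → Σₙ` -/
  π : ∀ n : ℕ, G n →* Equiv.Perm (Fin n)
  /-- `μ(id; x) = x` -/
  unit_comp : ∀ {n : ℕ} (x : G n),
    castF G (Fin.sum_univ_one fun _ => n) (comp unit fun _ : Fin 1 => x) = x
  /-- `μ(x; id, …, id) = x` -/
  comp_unit : ∀ {n : ℕ} (x : G n),
    castF G (by simp : (∑ _i : Fin n, 1) = n) (comp x fun _ : Fin n => unit) = x
  /-- associativity of operadic composition -/
  comp_assoc : ∀ {n : ℕ} {k : Fin n → ℕ} {m : ∀ i, Fin (k i) → ℕ}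
      (x : G n) (y : ∀ i, G (k i)) (z : ∀ i j, G (m i j)),
      castF G (sum_sigma_eq k m)
        (comp (comp x y) fun s => z ((finSigmaEquiv k).symm s).1 ((finSigmaEquiv k).symm s).2)
        = comp x fun i => comp (y i) (z i)
  /-- `π` preserves the operadic unit -/
  π_unit : π 1 unit = 1
  /-- `π` is a map of operads -/
  π_comp : ∀ {n : ℕ} {k : Fin n → ℕ} (g : G n) (f : ∀ i, G (k i)),
      π _ (comp g f) = permOperadComp k (π n g) fun i => π _ (f i)
  /-- the exchange law
  `μ(g; f₁,…,fₙ)·μ(g′; f₁′,…,fₙ′) = μ(g·g′; f_{π(g′)(1)}·f₁′, …, f_{π(g′)(n)}·fₙ′)` -/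
  exchange : ∀ {n : ℕ} {k : Fin n → ℕ} (g g' : G n)
      (f : ∀ i, G (k ((π n g').symm i))) (f' : ∀ i, G (k i)),
      castF G (Equiv.sum_comp (π n g').symm k) (comp g f) * comp g' f'
        = comp (g * g') fun i =>
            castF G (congrArg k ((π n g').symm_apply_apply i)) (f (π n g' i)) * f' i

/-- A `G`-operad for an action operad `G`: an operad `P` in sets together with a
right `G(n)`-action on each `P(n)` satisfying the two equivariance axioms. -/
structure GOperad (G : ℕ → Type) [∀ n, Group (G n)] (A : ActionOperad G) where
  /-- the underlying family of sets -/
  P : ℕ → Type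
  /-- the operadic unit `id ∈ P(1)` -/
  unit : P 1
  /-- operadic composition -/
  comp : ∀ {n : ℕ} {k : Fin n → ℕ}, P n → (∀ i, P (k i)) → P (∑ i, k i)
  /-- the right `G(n)`-action on `P(n)` -/
  act : ∀ {n : ℕ}, P n → G n → P n
  act_one : ∀ {n : ℕ} (x : P n), act x 1 = x
  act_mul : ∀ {n : ℕ} (x : P n) (g h : G n), act x (g * h) = act (act x g) h
  unit_comp : ∀ {n : ℕ} (x : P n),
    castF P (Fin.sum_univ_one fun _ => n) (comp unit fun _ : Fin 1 => x) = x
  comp_unit : ∀ {n : ℕ} (x : P n),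
    castF P (by simp : (∑ _i : Fin n, 1) = n) (comp x fun _ : Fin n => unit) = x
  comp_assoc : ∀ {n : ℕ} {k : Fin n → ℕ} {m : ∀ i, Fin (k i) → ℕ}
      (x : P n) (y : ∀ i, P (k i)) (z : ∀ i j, P (m i j)),
      castF P (sum_sigma_eq k m)
        (comp (comp x y) fun s => z ((finSigmaEquiv k).symm s).1 ((finSigmaEquiv k).symm s).2)
        = comp x fun i => comp (y i) (z i)
  /-- `μ(x; y₁·g₁, …, yₙ·gₙ) = μ(x; y₁, …, yₙ)·μ(e; g₁, …, gₙ)` -/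
  equiv_inner : ∀ {n : ℕ} {k : Fin n → ℕ} (x : P n) (y : ∀ i, P (k i))
      (g : ∀ i, G (k i)),
      comp x (fun i => act (y i) (g i)) = act (comp x y) (A.comp (1 : G n) g)
  /-- `μ(x·g; y₁, …, yₙ) = μ(x; y_{π(g)⁻¹(1)}, …, y_{π(g)⁻¹(n)})·μ(g; e, …, e)` -/
  equiv_outer : ∀ {n : ℕ} {k : Fin n → ℕ} (x : P n) (g : G n) (y : ∀ i, P (k i)),
      comp (act x g) y
        = castF P (Equiv.sum_comp (A.π n g).symm k)
            (act (comp x fun i => y ((A.π n g).symm i))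
              (A.comp g fun i => (1 : G (k ((A.π n g).symm i)))))

open CategoryTheory

variable {G : ℕ → Type} [∀ n, Group (G n)] {A : ActionOperad G}

/-- The relation `(p·g; x₁,…,xₙ) ∼ (p; x_{π(g)⁻¹(1)},…,x_{π(g)⁻¹(n)})` defining the
quotient `P(n) ×_{G(n)} Xⁿ`. -/
def PRel (P : GOperad G A) (n : ℕ) (X : Type) :
    P.P n × (Fin n → X) → P.P n × (Fin n → X) → Prop :=
  fun a b => ∃ g : G n, a.1 = P.act b.1 g ∧ ∀ i, b.2 i = a.2 ((A.π n g).symm i)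

/-- The value `P̲(X) = ∐ₙ P(n) ×_{G(n)} Xⁿ` of the endofunctor associated to a
`G`-operad `P`. -/
def PApply (P : GOperad G A) (X : Type) : Type :=
  Σ n : ℕ, Quot (PRel P n X)

/-- The endofunctor `P̲` of the category of sets associated to a `G`-operad `P`. -/
def PEndofunctor (P : GOperad G A) : Type ⥤ Type where
  obj X := PApply P X
  map {X Y} f := TypeCat.ofHom fun z =>
    ⟨z.1, Quot.lift (fun a => Quot.mk _ (a.1, fun i => f (a.2 i)))
      (by
        rintro a b ⟨g, h1, h2⟩
        exact Quot.sound ⟨g, h1, fun i => by show f (b.2 i) = f (a.2 _); rw [h2 i]⟩) z.2⟩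
  map_id X := by
    apply ConcreteCategory.hom_ext; intro z
    obtain ⟨n, q⟩ := z
    induction q using Quot.ind with
    | _ a => rfl
  map_comp {X Y Z} f g := by
    apply ConcreteCategory.hom_ext; intro z
    obtain ⟨n, q⟩ := z
    induction q using Quot.ind with
    | _ a => rfl

/-- The unit `η_X : X → P̲(X)`, `x ↦ [id; x]`, of the monad associated to a
`G`-operad `P`. -/
def pUnitMap (P : GOperad G A) (X : Type) : X ⟶ (PEndofunctor P).obj X :=
  TypeCat.ofHom fun x => ⟨1, Quot.mk _ (P.unit, fun _ => x)⟩

/-- The defining formula of the multiplication of the monad `P̲`. -/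
def IsPMulMap (P : GOperad G A)
    (mu : ∀ X : Type, (PEndofunctor P).obj ((PEndofunctor P).obj X) ⟶
      (PEndofunctor P).obj X) : Prop :=
  ∀ (X : Type) (n : ℕ) (k : Fin n → ℕ) (p : P.P n) (q : ∀ i, P.P (k i))
      (xs : ∀ i, Fin (k i) → X),
    mu X ⟨n, Quot.mk _ (p, fun i => ⟨k i, Quot.mk _ (q i, xs i)⟩)⟩
      = ⟨∑ i, k i, Quot.mk _ (P.comp p q,
          fun s => xs ((finSigmaEquiv k).symm s).1 ((finSigmaEquiv k).symm s).2)⟩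

/-- The monad `P̲` associated with a `G`-operad is cartesian: it preserves pullbacks
and the naturality squares of its unit and multiplication are pullback squares. -/
def PMonadCartesian (P : GOperad G A) : Prop :=
  Nonempty (Limits.PreservesLimitsOfShape Limits.WalkingCospan
      (PEndofunctor P)) ∧
    (∀ (X Y : Type) (f : X ⟶ Y),
      IsPullback (pUnitMap P X) f ((PEndofunctor P).map f) (pUnitMap P Y)) ∧
    ∀ (mu : ∀ X : Type, (PEndofunctor P).obj ((PEndofunctor P).obj X) ⟶
        (PEndofunctor P).obj X), IsPMulMap P mu →
      ∀ (X Y : Type) (f : X ⟶ Y),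
        IsPullback (mu X) ((PEndofunctor P).map ((PEndofunctor P).map f))
          ((PEndofunctor P).map f) (mu Y)

/-!
An element of `P̲X` is a class `[p; x₁, …, xₙ]`, and `[p; x] = [p; y]` exactly when
`y = x ∘ π(g)⁻¹` for some `g` with `p·g = p`. So if stabilisers act trivially through `π`, a class
with a fixed operation `p` determines its labels, and each of the three pullback conditions
reduces, label by label, to a pullback of sets. Conversely, if `p·g = p` with `π(g) ≠ 1`, then
`[p; (i, π(g) i)]` and `[p; (i, i)]` are distinct elements of `P̲(n × n)` with the same images
under both projections, so `P̲` does not preserve the pullback `n × n` of `n → 1 ← n`.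
-/

open CategoryTheory.Limits

/-- For `G = Σ` and `π = id` this is freeness of the actions of `Σₙ` on `P(n)`. -/
def GOperad.PermFree (P : GOperad G A) : Prop :=
  ∀ (n : ℕ) (p : P.P n) (g : G n), P.act p g = p → A.π n g = 1

lemma PRel.equivalence (P : GOperad G A) (n : ℕ) (X : Type) : Equivalence (PRel P n X) where
  refl a := ⟨1, (P.act_one a.1).symm, fun i => by rw [map_one]; rfl⟩
  symm := by
    rintro a b ⟨g, h1, h2⟩
    refine ⟨g⁻¹, by rw [h1, ← P.act_mul, mul_inv_cancel, P.act_one], fun i => ?_⟩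
    rw [map_inv, Equiv.Perm.inv_def, Equiv.symm_symm]
    simpa using (h2 (A.π n g i)).symm
  trans := by
    rintro a b c ⟨g, h1, h2⟩ ⟨g', h1', h2'⟩
    refine ⟨g' * g, by rw [h1, h1', P.act_mul], fun i => ?_⟩
    rw [map_mul]
    exact (h2' i).trans (h2 _)

/-- Concatenation of blocks `xᵢ : Fin kᵢ → X`, in the order of `finSigmaEquiv`. -/
def blockEquiv {n : ℕ} (k : Fin n → ℕ) (X : Type) :
    (∀ i, Fin (k i) → X) ≃ (Fin (∑ i, k i) → X) :=
  (Equiv.piCurry fun _ _ => X).symm.trans ((finSigmaEquiv k).arrowCongr (Equiv.refl X))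

namespace PApply

variable (P : GOperad G A) {X Y : Type}

def mk {n : ℕ} (p : P.P n) (x : Fin n → X) : (PEndofunctor P).obj X :=
  ⟨n, Quot.mk _ (p, x)⟩

variable {P}

lemma mk_eq_mk_iff {n : ℕ} {p q : P.P n} {x y : Fin n → X} :
    mk P p x = mk P q y ↔ PRel P n X (p, x) (q, y) := by
  refine ⟨fun h => ?_, fun h => congrArg (Sigma.mk n) (Quot.sound h)⟩
  exact (PRel.equivalence P n X).eqvGen_iff.mp
    (Quot.eqvGen_exact (eq_of_heq (Sigma.ext_iff.mp h).2))

lemma mk_act {n : ℕ} (p : P.P n) (g : G n) (x : Fin n → X) :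
    mk P (P.act p g) x = mk P p (x ∘ (A.π n g).symm) :=
  mk_eq_mk_iff.mpr ⟨g, rfl, fun _ => rfl⟩

lemma exists_eq_mk (z : (PEndofunctor P).obj X) :
    ∃ (n : ℕ) (p : P.P n) (x : Fin n → X), z = mk P p x := by
  obtain ⟨n, c⟩ := z
  obtain ⟨⟨p, x⟩, rfl⟩ := Quot.exists_rep c
  exact ⟨n, p, x, rfl⟩

lemma exists_eq_mk_mk (z : (PEndofunctor P).obj ((PEndofunctor P).obj X)) :
    ∃ (n : ℕ) (p : P.P n) (k : Fin n → ℕ) (q : ∀ i, P.P (k i)) (xs : ∀ i, Fin (k i) → X),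
      z = mk P p fun i => mk P (q i) (xs i) := by
  obtain ⟨n, p, v, rfl⟩ := exists_eq_mk z
  choose k q xs hv using fun i => exists_eq_mk (v i)
  exact ⟨n, p, k, q, xs, congrArg (mk P p) (funext hv)⟩

lemma exists_eq_mk_of_map_eq_mk (f : X ⟶ Y) {z : (PEndofunctor P).obj X} {n : ℕ}
    {p : P.P n} {y : Fin n → Y} (h : (PEndofunctor P).map f z = mk P p y) :
    ∃ x : Fin n → X, z = mk P p x ∧ ∀ i, f (x i) = y i := by
  obtain ⟨m, q, x, rfl⟩ := exists_eq_mk z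
  obtain rfl : m = n := congrArg Sigma.fst h
  obtain ⟨g, hq, hy⟩ := mk_eq_mk_iff.mp h
  rw [show q = P.act p g from hq]
  exact ⟨x ∘ (A.π m g).symm, mk_act p g x, fun i => (hy i).symm⟩

lemma exists_eq_mk_mk_of_map_map_eq (f : X ⟶ Y)
    {w : (PEndofunctor P).obj ((PEndofunctor P).obj X)} {n : ℕ} {p : P.P n}
    {k : Fin n → ℕ} {q : ∀ i, P.P (k i)} {ys : ∀ i, Fin (k i) → Y}
    (h : (PEndofunctor P).map ((PEndofunctor P).map f) w = mk P p fun i => mk P (q i) (ys i)) :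
    ∃ xs : ∀ i, Fin (k i) → X,
      w = (mk P p fun i => mk P (q i) (xs i)) ∧ ∀ i j, f (xs i j) = ys i j := by
  obtain ⟨v, rfl, hv⟩ := exists_eq_mk_of_map_eq_mk _ h
  choose xs hxs hf using fun i => exists_eq_mk_of_map_eq_mk f (hv i)
  exact ⟨xs, congrArg (mk P p) (funext hxs), hf⟩

lemma mk_injective_of_permFree (hP : P.PermFree) {n : ℕ} (p : P.P n) :
    Function.Injective (mk P p : (Fin n → X) → (PEndofunctor P).obj X) := by
  intro x y h
  obtain ⟨g, hg, hxy⟩ := mk_eq_mk_iff.mp h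
  rw [hP n p g hg.symm] at hxy
  exact funext fun i => (hxy i).symm

end PApply

open PApply

lemma IsPMulMap.apply_mk {P : GOperad G A}
    {mu : ∀ X : Type, (PEndofunctor P).obj ((PEndofunctor P).obj X) ⟶ (PEndofunctor P).obj X}
    (hmu : IsPMulMap P mu) {X : Type} {n : ℕ} (p : P.P n) {k : Fin n → ℕ}
    (q : ∀ i, P.P (k i)) (xs : ∀ i, Fin (k i) → X) :
    mu X (mk P p fun i => mk P (q i) (xs i)) = mk P (P.comp p q) (blockEquiv k X xs) :=
  hmu X n k p q xs

namespace GOperad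

variable {P : GOperad G A}

lemma isPullback_pUnitMap {X Y : Type} (f : X ⟶ Y) :
    IsPullback (pUnitMap P X) f ((PEndofunctor P).map f) (pUnitMap P Y) := by
  rw [Types.isPullback_iff]
  refine ⟨rfl, fun x x' ⟨h, _⟩ => ?_, fun a y h => ?_⟩
  · obtain ⟨g, -, hx⟩ := mk_eq_mk_iff.mp h
    exact (hx 0).symm
  · obtain ⟨x, rfl, hx⟩ := exists_eq_mk_of_map_eq_mk f h
    refine ⟨x 0, ?_, hx 0⟩
    exact congrArg (PApply.mk P P.unit) (funext fun i => congrArg x (Subsingleton.elim 0 i))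

lemma map_isPullback_of_permFree (hP : P.PermFree) {X₁ X₂ X₃ X₄ : Type}
    {t : X₁ ⟶ X₂} {l : X₁ ⟶ X₃} {r : X₂ ⟶ X₄} {b : X₃ ⟶ X₄} (h : IsPullback t l r b) :
    IsPullback ((PEndofunctor P).map t) ((PEndofunctor P).map l)
      ((PEndofunctor P).map r) ((PEndofunctor P).map b) := by
  rw [Types.isPullback_iff]
  refine ⟨(h.toCommSq.map (PEndofunctor P)).w, fun z z' ⟨ht, hl⟩ => ?_, fun u v huv => ?_⟩
  · obtain ⟨n, p, x, rfl⟩ := exists_eq_mk z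
    obtain ⟨x', rfl, htx⟩ := exists_eq_mk_of_map_eq_mk t ht.symm
    have hlx := mk_injective_of_permFree hP p hl
    exact congrArg (PApply.mk P p) (funext fun i =>
      Types.ext_of_isPullback h (htx i).symm (congrFun hlx i))
  · obtain ⟨n, p, y, rfl⟩ := exists_eq_mk u
    obtain ⟨z, rfl, hbz⟩ := exists_eq_mk_of_map_eq_mk b huv.symm
    choose x htx hlx using fun i => Types.exists_of_isPullback h (y i) (z i) (hbz i).symm
    exact ⟨PApply.mk P p x, congrArg (PApply.mk P p) (funext htx),
      congrArg (PApply.mk P p) (funext hlx)⟩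

lemma preservesPullbacks_of_permFree (hP : P.PermFree) :
    PreservesLimitsOfShape WalkingCospan (PEndofunctor P) :=
  preservesLimitsOfShape_walkingCospan_of_forall_isPullback fun _ _ _ f g _ =>
    ⟨_, _, _, .of_hasPullback f g, map_isPullback_of_permFree hP (.of_hasPullback f g)⟩

lemma isPullback_mul_of_permFree (hP : P.PermFree)
    {mu : ∀ X : Type, (PEndofunctor P).obj ((PEndofunctor P).obj X) ⟶ (PEndofunctor P).obj X}
    (hmu : IsPMulMap P mu) {X Y : Type} (f : X ⟶ Y) :
    IsPullback (mu X) ((PEndofunctor P).map ((PEndofunctor P).map f))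
      ((PEndofunctor P).map f) (mu Y) := by
  rw [Types.isPullback_iff]
  refine ⟨?_, fun w w' ⟨hw, hfw⟩ => ?_, fun a b hab => ?_⟩
  · ext w
    obtain ⟨n, p, k, q, xs, rfl⟩ := exists_eq_mk_mk w
    change (PEndofunctor P).map f (mu X _) =
      mu Y (PApply.mk P p fun i => PApply.mk P (q i) fun j => f (xs i j))
    rw [hmu.apply_mk, hmu.apply_mk]
    rfl
  · obtain ⟨n, p, k, q, xs, rfl⟩ := exists_eq_mk_mk w
    obtain ⟨xs', rfl, -⟩ := exists_eq_mk_mk_of_map_map_eq f hfw.symm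
    rw [hmu.apply_mk, hmu.apply_mk] at hw
    obtain rfl := (blockEquiv k X).injective (mk_injective_of_permFree hP _ hw)
    rfl
  · obtain ⟨n, p, k, q, ys, rfl⟩ := exists_eq_mk_mk b
    rw [hmu.apply_mk] at hab
    obtain ⟨x, rfl, hx⟩ := exists_eq_mk_of_map_eq_mk f hab
    have hys : (fun i j => f ((blockEquiv k X).symm x i j)) = ys :=
      (blockEquiv k Y).injective <|
        calc _ = fun s => f (blockEquiv k X ((blockEquiv k X).symm x) s) := rfl
          _ = _ := by rw [Equiv.apply_symm_apply]; exact funext hx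
    refine ⟨PApply.mk P p fun i => PApply.mk P (q i) ((blockEquiv k X).symm x i), ?_, ?_⟩
    · rw [hmu.apply_mk, Equiv.apply_symm_apply]
    · rw [← hys]
      rfl

lemma permFree_of_preservesPullbacks [PreservesLimitsOfShape WalkingCospan (PEndofunctor P)] :
    P.PermFree := by
  intro n p g hg
  have hprod : IsPullback (TypeCat.ofHom (Prod.fst : Fin n × Fin n → Fin n))
      (TypeCat.ofHom Prod.snd) (TypeCat.ofHom fun _ => PUnit.unit)
      (TypeCat.ofHom fun _ => PUnit.unit) := by
    rw [Types.isPullback_iff]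
    exact ⟨rfl, fun _ _ h => Prod.ext h.1 h.2, fun x y _ => ⟨(x, y), rfl, rfl⟩⟩
  have hsnd : PApply.mk P p (A.π n g) = PApply.mk P p id := by
    conv_lhs => rw [← hg, mk_act]
    exact congrArg (PApply.mk P p) (funext (A.π n g).apply_symm_apply)
  have heq : PApply.mk P p (fun i => (i, A.π n g i)) = PApply.mk P p fun i => (i, i) :=
    Types.ext_of_isPullback (hprod.map (PEndofunctor P)) rfl hsnd
  obtain ⟨ρ, -, hρ⟩ := mk_eq_mk_iff.mp heq
  refine Equiv.ext fun i => ?_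
  obtain ⟨hi₁, hi₂⟩ := Prod.ext_iff.mp (hρ i)
  exact (congrArg (A.π n g) hi₁).trans hi₂.symm

theorem pMonadCartesian_iff_permFree : PMonadCartesian P ↔ P.PermFree :=
  ⟨fun ⟨⟨_⟩, _, _⟩ => permFree_of_preservesPullbacks,
    fun hP => ⟨⟨preservesPullbacks_of_permFree hP⟩, fun _ _ f => isPullback_pUnitMap f,
      fun _ hmu _ _ f => isPullback_mul_of_permFree hP hmu f⟩⟩

end GOperad

theorem symmetricOperad_cartesian_iff_free_general
    (A : ActionOperad (fun n => Equiv.Perm (Fin n)))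
    (hπ : ∀ n, A.π n = MonoidHom.id (Equiv.Perm (Fin n)))
    (P : GOperad (fun n => Equiv.Perm (Fin n)) A) :
    PMonadCartesian P ↔
      ∀ (n : ℕ) (p : P.P n) (σ : Equiv.Perm (Fin n)), P.act p σ = p → σ = 1 := by
  simp only [GOperad.pMonadCartesian_iff_permFree, GOperad.PermFree, hπ, MonoidHom.id_apply]

/-- Let `P` be a symmetric operad, i.e. a `G`-operad for the
action operad of symmetric groups (operadic composition given by block composition
of permutations, with `π` the identity).  Then the associated monad `P̲` on sets is
cartesian if and only if each action of `Σₙ` on `P(n)` is free. -/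
theorem symmetricOperad_cartesian_iff_free
    (A : ActionOperad (fun n => Equiv.Perm (Fin n)))
    (hπ : ∀ n, A.π n = MonoidHom.id (Equiv.Perm (Fin n)))
    (hμ : ∀ (n : ℕ) (k : Fin n → ℕ) (σ : Equiv.Perm (Fin n))
      (τ : ∀ i, Equiv.Perm (Fin (k i))), A.comp σ τ = permOperadComp k σ τ)
    (P : GOperad (fun n => Equiv.Perm (Fin n)) A) :
    PMonadCartesian P ↔
      ∀ (n : ℕ) (p : P.P n) (σ : Equiv.Perm (Fin n)), P.act p σ = p → σ = 1 :=
  symmetricOperad_cartesian_iff_free_general A hπ P
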